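/- Let R = k[[x,y]] with k of characteristic p > 0, let 1 ≤ s < s' ≤ 2, choose a positive integer n with n > 2/(s'−s), and let I = (x^{2n}, y^{2n}). Then x^{⌈sn⌉}y^{⌈sn⌉} lies in the weak s-closure of I but not in the weak s'-closure of I. -/

import Mathlib

/-!
Write `a = ⌈sn⌉`, `z = (xy)^a`, `q = p^e` and `I = (x^{2n}, y^{2n})`.

With `c = (xy)^{2n}` we get `c z^q = (xy)^{2n + aq}`, and `n⌈sq⌉ ≤ aq + n` lets one split
`⌈sq⌉ = i + j` with `x^{2ni} y^{2nj}` dividing it, so `c z^q ∈ I^{⌈sq⌉}` for every `e`.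

Conversely, if `c` has a nonzero coefficient at `w`, then for `q > w₀ + w₁` the monomial
`x^{w₀+aq} y^{w₁+aq}` occurs in `c z^q`. It cannot come from `I^{⌈s'q⌉}`, whose elements have
order at least `2n⌈s'q⌉ ≥ 2(a+1)q` (this is where `n(s' - s) > 2` enters), nor from `I^{[q]}`,
which Frobenius additivity puts inside `(x^{2nq}, y^{2nq})`, while both exponents are below
`(a+1)q ≤ 2nq`.
-/

open MvPowerSeries Filter

/-- The `q`-th Frobenius power of an ideal: the ideal generated by `q`-th powers of
elements of `J`. -/
def frobPow {R : Type*} [CommRing R] (J : Ideal R) (q : ℕ) : Ideal R :=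
  Ideal.span ((fun x => x ^ q) '' (J : Set R))

/-- `z` is in the weak `s`-closure of `I`: there is `c ≠ 0` with
`c * z^{p^e} ∈ I^{⌈s p^e⌉} + I^{[p^e]}` for all `e ≫ 0`.  (In a domain, `c ≠ 0` is
equivalent to `c` avoiding all minimal primes.) -/
def memWeakSClosure {R : Type*} [CommRing R] (p : ℕ) (s : ℝ) (I : Ideal R) (z : R) :
    Prop :=
  ∃ c : R, c ≠ 0 ∧ ∀ᶠ e : ℕ in atTop,
    c * z ^ (p ^ e) ∈ I ^ (⌈s * (p : ℝ) ^ e⌉.toNat) + frobPow I (p ^ e)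


open Finsupp

theorem frobPow_span_le {R : Type*} [CommRing R] (p : ℕ) [ExpChar R p] (S : Set R) (e : ℕ) :
    frobPow (Ideal.span S) (p ^ e) ≤ Ideal.span ((· ^ p ^ e) '' S) := by
  rw [frobPow, Ideal.span_le]
  rintro _ ⟨f, hf, rfl⟩
  rw [SetLike.mem_coe]
  induction hf using Submodule.span_induction with
  | mem x hx => exact Ideal.subset_span ⟨x, hx, rfl⟩
  | zero => simp [zero_pow (pow_ne_zero e (expChar_pos R p).ne')]
  | add x y _ _ hx hy => simpa only [add_pow_expChar_pow] using Ideal.add_mem _ hx hy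
  | smul a x _ hx => simpa only [smul_eq_mul, mul_pow] using Ideal.mul_mem_left _ _ hx

theorem pow_mul_pow_mem_span_pow_pair_pow {R : Type*} [CommSemiring R] (x y : R)
    {N i j u v : ℕ} (hu : N * i ≤ u) (hv : N * j ≤ v) :
    x ^ u * y ^ v ∈ Ideal.span {x ^ N, y ^ N} ^ (i + j) := by
  obtain ⟨u', rfl⟩ := Nat.exists_eq_add_of_le hu
  obtain ⟨v', rfl⟩ := Nat.exists_eq_add_of_le hv
  have hsplit : x ^ (N * i + u') * y ^ (N * j + v') =
      (x ^ N) ^ i * (y ^ N) ^ j * (x ^ u' * y ^ v') := by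
    ring
  rw [hsplit, pow_add]
  exact Ideal.mul_mem_right _ _ (Ideal.mul_mem_mul
    (Ideal.pow_mem_pow (Ideal.subset_span (by simp)) i)
    (Ideal.pow_mem_pow (Ideal.subset_span (by simp)) j))

namespace MvPowerSeries

variable {σ R : Type*}

section CommSemiring

variable [CommSemiring R]

instance expChar (p : ℕ) [ExpChar R p] : ExpChar (MvPowerSeries σ R) p :=
  expChar_of_injective_ringHom C_injective p

theorem X_pow_mul_X_pow_eq_monomial (i j : σ) (u v : ℕ) :
    (X i : MvPowerSeries σ R) ^ u * X j ^ v = monomial (single i u + single j v) 1 := by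
  rw [X_pow_eq, X_pow_eq, monomial_mul_monomial, one_mul]

def orderIdeal (N : ℕ∞) : Ideal (MvPowerSeries σ R) where
  carrier := {f | N ≤ f.order}
  add_mem' hf hg := (le_min hf hg).trans min_order_le_add
  zero_mem' := by simp
  smul_mem' _ _ hf := (le_add_left hf).trans le_order_mul

theorem mem_orderIdeal {N : ℕ∞} {f : MvPowerSeries σ R} :
    f ∈ orderIdeal N ↔ N ≤ f.order :=
  Iff.rfl

theorem X_pow_mem_orderIdeal (i : σ) (M : ℕ) :
    (X i : MvPowerSeries σ R) ^ M ∈ orderIdeal M := by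
  classical
  refine le_order fun d hd => ?_
  rw [coeff_X_pow, if_neg]
  rintro rfl
  simp at hd

theorem orderIdeal_mul_le (M N : ℕ∞) :
    orderIdeal M * orderIdeal N ≤ (orderIdeal (M + N) : Ideal (MvPowerSeries σ R)) :=
  Ideal.mul_le.2 fun _ hf _ hg => (add_le_add hf hg).trans le_order_mul

theorem orderIdeal_pow_le (N : ℕ∞) (m : ℕ) :
    orderIdeal N ^ m ≤ (orderIdeal (m * N) : Ideal (MvPowerSeries σ R)) := by
  induction m with
  | zero =>
    rw [pow_zero, Nat.cast_zero, zero_mul, Ideal.one_eq_top]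
    exact fun _ _ => mem_orderIdeal.2 zero_le
  | succ m ih =>
    rw [pow_succ, Nat.cast_succ, add_one_mul]
    exact (Ideal.mul_mono_left ih).trans (orderIdeal_mul_le _ _)

theorem coeff_eq_zero_of_mem_span_X_pow_pair {i j : σ} {M : ℕ} {f : MvPowerSeries σ R}
    (hf : f ∈ Ideal.span {X i ^ M, X j ^ M}) {d : σ →₀ ℕ} (hi : d i < M) (hj : d j < M) :
    coeff d f = 0 := by
  obtain ⟨a, b, rfl⟩ := Ideal.mem_span_pair.1 hf
  rw [map_add, X_pow_dvd_iff.1 (dvd_mul_left _ a) d hi, X_pow_dvd_iff.1 (dvd_mul_left _ b) d hj,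
    add_zero]

end CommSemiring

theorem coeff_eq_zero_of_mem_span_pow_sup_frobPow [CommRing R] (p : ℕ) [ExpChar R p]
    {i j : σ} {N m e : ℕ} {f : MvPowerSeries σ R}
    (hf : f ∈ Ideal.span {X i ^ N, X j ^ N} ^ m + frobPow (Ideal.span {X i ^ N, X j ^ N}) (p ^ e))
    {d : σ →₀ ℕ} (hd : degree d < m * N) (hi : d i < N * p ^ e) (hj : d j < N * p ^ e) :
    coeff d f = 0 := by
  have hspan : Ideal.span {X i ^ N, X j ^ N} ≤ (orderIdeal N : Ideal (MvPowerSeries σ R)) := by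
    rw [Ideal.span_le, Set.insert_subset_iff, Set.singleton_subset_iff]
    exact ⟨X_pow_mem_orderIdeal i N, X_pow_mem_orderIdeal j N⟩
  have hfrob := frobPow_span_le p {(X i : MvPowerSeries σ R) ^ N, X j ^ N} e
  rw [Set.image_pair, ← pow_mul, ← pow_mul] at hfrob
  obtain ⟨y, hy, z, hz, rfl⟩ := Submodule.mem_sup.1
    (sup_le_sup ((Ideal.pow_right_mono hspan m).trans (orderIdeal_pow_le N m)) hfrob hf)
  rw [map_add, coeff_of_lt_order (lt_of_lt_of_le (by exact_mod_cast hd) hy),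
    coeff_eq_zero_of_mem_span_X_pow_pair hz hi hj, add_zero]

end MvPowerSeries

theorem nat_mul_ceil_mul_le (s : ℝ) (n q : ℕ) :
    n * ⌈s * q⌉₊ ≤ ⌈s * n⌉₊ * q + n := by
  rcases lt_or_ge s 0 with hs | hs
  · simp [Nat.ceil_eq_zero.2 (mul_nonpos_of_nonpos_of_nonneg hs.le q.cast_nonneg)]
  · have : (n * ⌈s * q⌉₊ : ℝ) ≤ ⌈s * n⌉₊ * q + n := calc
      (n * ⌈s * q⌉₊ : ℝ) ≤ n * (s * q + 1) := by
        gcongr; exact (Nat.ceil_lt_add_one (by positivity)).le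
      _ = s * n * q + n := by ring
      _ ≤ ⌈s * n⌉₊ * q + n := by gcongr; exact Nat.le_ceil _
    exact_mod_cast this

theorem ceil_add_one_mul_le {s s' : ℝ} (hs : 0 ≤ s) {n : ℕ} (hgap : s * n + 2 < s' * n)
    (q : ℕ) : (⌈s * n⌉₊ + 1) * q ≤ n * ⌈s' * q⌉₊ := by
  have ha : (⌈s * n⌉₊ + 1 : ℝ) ≤ s' * n := by
    linarith [Nat.ceil_lt_add_one (by positivity : 0 ≤ s * n)]
  have : ((⌈s * n⌉₊ + 1) * q : ℝ) ≤ n * ⌈s' * q⌉₊ := calc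
    ((⌈s * n⌉₊ + 1) * q : ℝ) ≤ s' * n * q := by gcongr
    _ = n * (s' * q) := by ring
    _ ≤ n * ⌈s' * q⌉₊ := by gcongr; exact Nat.le_ceil _
  exact_mod_cast this

theorem memWeakSClosure_X_pow_mul_X_pow (k : Type*) [CommRing k] [Nontrivial k] (p : ℕ)
    (s : ℝ) (n : ℕ) :
    memWeakSClosure p s
        (Ideal.span {(X 0 : MvPowerSeries (Fin 2) k) ^ (2 * n), X 1 ^ (2 * n)})
        ((X 0 : MvPowerSeries (Fin 2) k) ^ (⌈s * (n : ℝ)⌉.toNat) *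
          X 1 ^ (⌈s * (n : ℝ)⌉.toNat)) := by
  refine ⟨X 0 ^ (2 * n) * X 1 ^ (2 * n), ?_, .of_forall fun e => Submodule.mem_sup_left ?_⟩
  · rw [X_pow_mul_X_pow_eq_monomial, ne_zero_iff_exists_coeff_ne_zero]
    exact ⟨_, by rw [coeff_monomial_same]; exact one_ne_zero⟩
  · rw [Int.ceil_toNat, Int.ceil_toNat, ← Nat.cast_pow]
    set a := ⌈s * n⌉₊
    set q := p ^ e
    set m := ⌈s * q⌉₊
    have hm : n * m ≤ a * q + n := nat_mul_ceil_mul_le s n q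
    have hcz : (X 0 : MvPowerSeries (Fin 2) k) ^ (2 * n) * X 1 ^ (2 * n) * (X 0 ^ a * X 1 ^ a) ^ q =
        X 0 ^ (2 * n + a * q) * X 1 ^ (2 * n + a * q) := by
      ring
    rw [hcz, ← show (m + 1) / 2 + m / 2 = m by omega]
    apply pow_mul_pow_mem_span_pow_pair_pow <;>
      nlinarith [Nat.div_mul_le_self (m + 1) 2, Nat.div_mul_le_self m 2]

theorem not_memWeakSClosure_X_pow_mul_X_pow (k : Type*) [CommRing k] {p : ℕ} [ExpChar k p]
    (hp : 1 < p) {s s' : ℝ} (hs : 0 ≤ s) (hs' : s' ≤ 2) {n : ℕ}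
    (hgap : s * n + 2 < s' * n) :
    ¬ memWeakSClosure p s'
        (Ideal.span {(X 0 : MvPowerSeries (Fin 2) k) ^ (2 * n), X 1 ^ (2 * n)})
        ((X 0 : MvPowerSeries (Fin 2) k) ^ (⌈s * (n : ℝ)⌉.toNat) *
          X 1 ^ (⌈s * (n : ℝ)⌉.toNat)) := by
  rintro ⟨c, hc, hev⟩
  obtain ⟨w, hw⟩ := (ne_zero_iff_exists_coeff_ne_zero c).1 hc
  obtain ⟨e, hmem, hwq⟩ := (hev.and
    ((tendsto_pow_atTop_atTop_of_one_lt hp).eventually_gt_atTop (w 0 + w 1))).exists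
  rw [Int.ceil_toNat, Int.ceil_toNat, ← Nat.cast_pow] at hmem
  set a := ⌈s * n⌉₊
  set q := p ^ e
  set m := ⌈s' * q⌉₊
  have hm : (a + 1) * q ≤ n * m := ceil_add_one_mul_le hs hgap q
  have ha : (a + 1) * q ≤ 2 * n * q := by
    refine Nat.mul_le_mul_right q ?_
    have : (a + 1 : ℝ) < 2 * n := by
      linarith [Nat.ceil_lt_add_one (by positivity : 0 ≤ s * n),
        mul_le_mul_of_nonneg_right hs' n.cast_nonneg]
    exact_mod_cast this.le
  have hzq : ((X 0 : MvPowerSeries (Fin 2) k) ^ a * X 1 ^ a) ^ q =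
      monomial (single 0 (a * q) + single 1 (a * q)) 1 := by
    rw [mul_pow, ← pow_mul, ← pow_mul, X_pow_mul_X_pow_eq_monomial]
  rw [hzq] at hmem
  apply hw
  rw [← mul_one (coeff w c), ← coeff_add_mul_monomial]
  refine coeff_eq_zero_of_mem_span_pow_sup_frobPow p hmem ?_ ?_ ?_
  · simpa [degree_eq_sum, Fin.sum_univ_two] using
      (by nlinarith : w 0 + a * q + (w 1 + a * q) < m * (2 * n))
  · simpa using (by nlinarith : w 0 + a * q < 2 * n * q)
  · simpa using (by nlinarith : w 1 + a * q < 2 * n * q)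

theorem weak_s_closure_distinct (k : Type*) [Field k] (p : ℕ) [Fact p.Prime] [CharP k p]
    (s s' : ℝ) (h1 : 1 ≤ s) (hss' : s < s') (h2 : s' ≤ 2)
    (n : ℕ) (hn2 : 2 / (s' - s) < (n : ℝ)) :
    memWeakSClosure p s
        (Ideal.span {(X 0 : MvPowerSeries (Fin 2) k) ^ (2 * n), X 1 ^ (2 * n)})
        ((X 0 : MvPowerSeries (Fin 2) k) ^ (⌈s * (n : ℝ)⌉.toNat) *
          X 1 ^ (⌈s * (n : ℝ)⌉.toNat)) ∧
      ¬ memWeakSClosure p s'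
        (Ideal.span {(X 0 : MvPowerSeries (Fin 2) k) ^ (2 * n), X 1 ^ (2 * n)})
        ((X 0 : MvPowerSeries (Fin 2) k) ^ (⌈s * (n : ℝ)⌉.toNat) *
          X 1 ^ (⌈s * (n : ℝ)⌉.toNat)) := by
  have hgap : s * n + 2 < s' * n := by
    rw [div_lt_iff₀ (sub_pos.2 hss')] at hn2
    linarith
  exact ⟨memWeakSClosure_X_pow_mul_X_pow k p s n,
    not_memWeakSClosure_X_pow_mul_X_pow k (Fact.out : p.Prime).one_lt (by linarith) h2 hgap⟩
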